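/- Let u and ξ be smooth vector fields on ℝ^n, let F^k := u^i u^k_{|i}, and suppose the additional condition u^i u^j £_ξ Γ^k_{ij} = −(F^k + ξ^k_{|j} F^j) holds identically for all k. Then, pointwise: u^n (u^k + u^i ξ^k_{|i})_{|n} = R^k_{ijl} u^i u^j ξ^l + u^n (w^k)_{|n} − T^k_{jl} F^j ξ^l, where w is the vector field w^k := T^k_{jl} u^j ξ^l and the covariant derivatives (·)_{|n} on the left and of w are covariant derivatives of vector fields. -/

import Mathlib

open scoped BigOperators

noncomputable section

/-- Partial derivative `∂_j f` of a scalar function on `ℝ^n`. -/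
def pd {n : ℕ} (j : Fin n) (f : (Fin n → ℝ) → ℝ) (x : Fin n → ℝ) : ℝ :=
  fderiv ℝ f x (Pi.single j 1)

/-- Covariant derivative of a vector field: `ξ^k_{|j} = ∂_j ξ^k + Γ^k_{mj} ξ^m`. -/
def covV {n : ℕ} (Γ : Fin n → Fin n → Fin n → (Fin n → ℝ) → ℝ)
    (ξ : Fin n → (Fin n → ℝ) → ℝ) (k j : Fin n) (x : Fin n → ℝ) : ℝ :=
  pd j (ξ k) x + ∑ m, Γ k m j x * ξ m x

/-- Covariant derivative of a (1,1)-tensor field: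
`A^k_{i|j} = ∂_j A^k_i + Γ^k_{mj} A^m_i − Γ^m_{ij} A^k_m`. -/
def covT {n : ℕ} (Γ : Fin n → Fin n → Fin n → (Fin n → ℝ) → ℝ)
    (A : Fin n → Fin n → (Fin n → ℝ) → ℝ) (k i j : Fin n) (x : Fin n → ℝ) : ℝ :=
  pd j (A k i) x + ∑ m, Γ k m j x * A m i x - ∑ m, Γ m i j x * A k m x

/-- Curvature tensor
`R^k_{ijl} = ∂_j Γ^k_{il} − ∂_l Γ^k_{ij} + Γ^n_{il} Γ^k_{nj} − Γ^n_{ij} Γ^k_{nl}`. -/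
def curv {n : ℕ} (Γ : Fin n → Fin n → Fin n → (Fin n → ℝ) → ℝ)
    (k i j l : Fin n) (x : Fin n → ℝ) : ℝ :=
  pd j (Γ k i l) x - pd l (Γ k i j) x
    + ∑ m, Γ m i l x * Γ k m j x - ∑ m, Γ m i j x * Γ k m l x

/-- Torsion tensor `T^k_{ij} = Γ^k_{ji} − Γ^k_{ij}`. -/
def tor {n : ℕ} (Γ : Fin n → Fin n → Fin n → (Fin n → ℝ) → ℝ)
    (k i j : Fin n) (x : Fin n → ℝ) : ℝ :=
  Γ k j i x - Γ k i j x

/-- Lie derivative of a vector field: `(£_ξ u)^k = ξ^j ∂_j u^k − u^j ∂_j ξ^k`. -/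
def lieV {n : ℕ} (ξ u : Fin n → (Fin n → ℝ) → ℝ) (k : Fin n) (x : Fin n → ℝ) : ℝ :=
  ∑ j, ξ j x * pd j (u k) x - ∑ j, u j x * pd j (ξ k) x

/-- Lie derivative of a (1,1)-tensor field:
`(£_ξ A)^k_i = ξ^m ∂_m A^k_i − A^m_i ∂_m ξ^k + A^k_m ∂_i ξ^m`. -/
def lieT {n : ℕ} (ξ : Fin n → (Fin n → ℝ) → ℝ)
    (A : Fin n → Fin n → (Fin n → ℝ) → ℝ) (k i : Fin n) (x : Fin n → ℝ) : ℝ :=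
  ∑ m, ξ m x * pd m (A k i) x - ∑ m, A m i x * pd m (ξ k) x
    + ∑ m, A k m x * pd i (ξ m) x

/-- Lie derivative of the connection coefficients:
`£_ξ Γ^k_{ij} = ∂_j ∂_i ξ^k + ξ^m ∂_m Γ^k_{ij} − Γ^m_{ij} ∂_m ξ^k
  + Γ^k_{mj} ∂_i ξ^m + Γ^k_{im} ∂_j ξ^m`. -/
def lieC {n : ℕ} (ξ : Fin n → (Fin n → ℝ) → ℝ)
    (Γ : Fin n → Fin n → Fin n → (Fin n → ℝ) → ℝ)
    (k i j : Fin n) (x : Fin n → ℝ) : ℝ :=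
  pd j (fun y => pd i (ξ k) y) x + ∑ m, ξ m x * pd m (Γ k i j) x
    - ∑ m, Γ m i j x * pd m (ξ k) x + ∑ m, Γ k m j x * pd i (ξ m) x
    + ∑ m, Γ k i m x * pd j (ξ m) x

lemma contDiff_pd {n : ℕ} {f : (Fin n → ℝ) → ℝ} (hf : ContDiff ℝ (⊤ : ℕ∞) f) (j : Fin n) :
    ContDiff ℝ (⊤ : ℕ∞) (pd j f) := by
  have h1 : ContDiff ℝ (⊤ : ℕ∞) (fun x => fderiv ℝ f x) := hf.fderiv_right (by simp)
  exact h1.clm_apply contDiff_const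

lemma pd_add {n : ℕ} {f g : (Fin n → ℝ) → ℝ} {x : Fin n → ℝ} (j : Fin n)
    (hf : DifferentiableAt ℝ f x) (hg : DifferentiableAt ℝ g x) :
    pd j (fun y => f y + g y) x = pd j f x + pd j g x := by
  simp [pd, fderiv_fun_add hf hg]

lemma pd_sub {n : ℕ} {f g : (Fin n → ℝ) → ℝ} {x : Fin n → ℝ} (j : Fin n)
    (hf : DifferentiableAt ℝ f x) (hg : DifferentiableAt ℝ g x) :
    pd j (fun y => f y - g y) x = pd j f x - pd j g x := by
  simp [pd, fderiv_fun_sub hf hg]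

lemma pd_mul {n : ℕ} {f g : (Fin n → ℝ) → ℝ} {x : Fin n → ℝ} (j : Fin n)
    (hf : DifferentiableAt ℝ f x) (hg : DifferentiableAt ℝ g x) :
    pd j (fun y => f y * g y) x = pd j f x * g x + f x * pd j g x := by
  simp [pd, fderiv_fun_mul hf hg]; ring

lemma pd_sum {n : ℕ} {ι : Type*} (s : Finset ι) {f : ι → (Fin n → ℝ) → ℝ} {x : Fin n → ℝ}
    (j : Fin n) (hf : ∀ i ∈ s, DifferentiableAt ℝ (f i) x) :
    pd j (fun y => ∑ i ∈ s, f i y) x = ∑ i ∈ s, pd j (f i) x := by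
  simp [pd, fderiv_fun_sum hf]


section helpers
variable {n : ℕ}

lemma sum_ext2 (f g : Fin n → Fin n → ℝ) (h : ∀ a b, f a b = g a b) :
    (∑ a, ∑ b, f a b) = ∑ a, ∑ b, g a b :=
  Finset.sum_congr rfl fun a _ => Finset.sum_congr rfl fun b _ => h a b

lemma sum_ext3 (f g : Fin n → Fin n → Fin n → ℝ) (h : ∀ a b c, f a b c = g a b c) :
    (∑ a, ∑ b, ∑ c, f a b c) = ∑ a, ∑ b, ∑ c, g a b c :=
  Finset.sum_congr rfl fun a _ => Finset.sum_congr rfl fun b _ =>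
    Finset.sum_congr rfl fun c _ => h a b c

lemma sum_ext4 (f g : Fin n → Fin n → Fin n → Fin n → ℝ)
    (h : ∀ a b c d, f a b c d = g a b c d) :
    (∑ a, ∑ b, ∑ c, ∑ d, f a b c d) = ∑ a, ∑ b, ∑ c, ∑ d, g a b c d :=
  Finset.sum_congr rfl fun a _ => Finset.sum_congr rfl fun b _ =>
    Finset.sum_congr rfl fun c _ => Finset.sum_congr rfl fun d _ => h a b c d

lemma perm_s12of3 (f : Fin n → Fin n → Fin n → ℝ) :
    (∑ b, ∑ a, ∑ c, f a b c) = ∑ a, ∑ b, ∑ c, f a b c := Finset.sum_comm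

lemma perm_rot3 (f : Fin n → Fin n → Fin n → ℝ) :
    (∑ b, ∑ c, ∑ a, f a b c) = ∑ a, ∑ b, ∑ c, f a b c :=
  (Finset.sum_congr rfl fun b _ => Finset.sum_comm).trans Finset.sum_comm

lemma perm_rev3 (f : Fin n → Fin n → Fin n → ℝ) :
    (∑ c, ∑ b, ∑ a, f a b c) = ∑ a, ∑ b, ∑ c, f a b c :=
  (Finset.sum_comm (f := fun c b => ∑ a, f a b c)).trans (perm_rot3 f)

lemma perm_q2 (f : Fin n → Fin n → Fin n → Fin n → ℝ) :
    (∑ b, ∑ d, ∑ a, ∑ c, f a b c d) = ∑ a, ∑ b, ∑ c, ∑ d, f a b c d := by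
  calc (∑ b, ∑ d, ∑ a, ∑ c, f a b c d)
      = ∑ b, ∑ a, ∑ d, ∑ c, f a b c d :=
        Finset.sum_congr rfl fun b _ => Finset.sum_comm
    _ = ∑ a, ∑ b, ∑ d, ∑ c, f a b c d := Finset.sum_comm
    _ = ∑ a, ∑ b, ∑ c, ∑ d, f a b c d :=
        Finset.sum_congr rfl fun a _ => Finset.sum_congr rfl fun b _ => Finset.sum_comm

lemma perm_q4 (f : Fin n → Fin n → Fin n → Fin n → ℝ) :
    (∑ a, ∑ d, ∑ b, ∑ c, f a b c d) = ∑ a, ∑ b, ∑ c, ∑ d, f a b c d := by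
  calc (∑ a, ∑ d, ∑ b, ∑ c, f a b c d)
      = ∑ a, ∑ b, ∑ d, ∑ c, f a b c d :=
        Finset.sum_congr rfl fun a _ => Finset.sum_comm
    _ = ∑ a, ∑ b, ∑ c, ∑ d, f a b c d :=
        Finset.sum_congr rfl fun a _ => Finset.sum_congr rfl fun b _ => Finset.sum_comm

lemma perm_rev4 (f : Fin n → Fin n → Fin n → Fin n → ℝ) :
    (∑ d, ∑ c, ∑ b, ∑ a, f a b c d) = ∑ a, ∑ b, ∑ c, ∑ d, f a b c d := by
  calc (∑ d, ∑ c, ∑ b, ∑ a, f a b c d)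
      = ∑ d, ∑ a, ∑ b, ∑ c, f a b c d :=
        Finset.sum_congr rfl fun d _ => perm_rev3 (fun a b c => f a b c d)
    _ = ∑ a, ∑ d, ∑ b, ∑ c, f a b c d := Finset.sum_comm
    _ = ∑ a, ∑ b, ∑ c, ∑ d, f a b c d := perm_q4 f

end helpers

lemma key {n : ℕ} (k : Fin n) (U X : Fin n → ℝ) (dU dX DD : Fin n → Fin n → ℝ)
    (G : Fin n → Fin n → Fin n → ℝ) (dG : Fin n → Fin n → Fin n → Fin n → ℝ)
    (hc : ∑ i, ∑ j, U i * U j * (DD i j + ∑ m, X m * dG m k i j - ∑ m, G m i j * dX m k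
            + ∑ m, G k m j * dX i m + ∑ m, G k i m * dX j m)
      = -(∑ i, U i * (dU i k + ∑ m, G k m i * U m)
          + ∑ j, (dX j k + ∑ m, G k m j * X m) * ∑ i, U i * (dU i j + ∑ m, G j m i * U m))) :
    ∑ m, U m * (dU m k + ∑ i, (dU m i * (dX i k + ∑ q, G k q i * X q)
          + U i * (DD i m + ∑ q, (dG m k q i * X q + G k q i * dX m q)))
        + ∑ p, G k p m * (U p + ∑ i, U i * (dX i p + ∑ q, G p q i * X q)))
    = ∑ i, ∑ j, ∑ l, (dG j k i l - dG l k i j + ∑ m, G m i l * G k m j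
            - ∑ m, G m i j * G k m l) * U i * U j * X l
      + ∑ m, U m * (∑ j, ∑ l, (((dG m k l j - dG m k j l) * U j
              + (G k l j - G k j l) * dU m j) * X l + (G k l j - G k j l) * U j * dX m l)
          + ∑ p, G k p m * ∑ j, ∑ l, (G p l j - G p j l) * U j * X l)
      - ∑ j, ∑ l, ((G k l j - G k j l) * ∑ i, U i * (dU i j + ∑ q, G j q i * U q)) * X l := by
  -- conversions
  have cL4 : (∑ x, ∑ i, U x * (U i * DD i x)) = ∑ a, ∑ b, U a * U b * DD a b :=
    Finset.sum_comm.trans (sum_ext2 _ _ fun a b => by ring)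
  have cL8 : (∑ x, ∑ x1, ∑ i, U x * (G k x1 x * (U i * dX i x1)))
      = ∑ a, ∑ b, ∑ c, U a * (U b * (G k c b * dX a c)) :=
    (perm_rot3 (fun a b c => U b * (G k c b * (U a * dX a c)))).trans
      (sum_ext3 _ _ fun a b c => by ring)
  have cT5 : (∑ x, ∑ x1, ∑ i, U x * (dG x k i x1 * U x1 * X i))
      = ∑ a, ∑ b, ∑ c, U a * (U b * (dG a k c b * X c)) :=
    sum_ext3 _ _ fun a b c => by ring
  have cT6 : (∑ x, ∑ x1, ∑ i, U x * (dG x k x1 i * U x1 * X i))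
      = ∑ a, ∑ b, ∑ c, dG b k a c * U a * U b * X c :=
    (perm_s12of3 (fun a b c => U b * (dG b k a c * U a * X c))).trans
      (sum_ext3 _ _ fun a b c => by ring)
  have cT7 : (∑ x, ∑ x1, ∑ i, U x * (G k i x1 * dU x x1 * X i))
      = ∑ a, ∑ b, ∑ c, U a * (dU a b * (G k c b * X c)) :=
    sum_ext3 _ _ fun a b c => by ring
  have cT9 : (∑ x, ∑ x1, ∑ i, U x * (G k i x1 * U x1 * dX x i))
      = ∑ a, ∑ b, ∑ c, U a * (U b * (G k c b * dX a c)) :=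
    sum_ext3 _ _ fun a b c => by ring
  have cT10 : (∑ x, ∑ x1, ∑ i, U x * (G k x1 i * U x1 * dX x i))
      = ∑ a, ∑ b, ∑ c, U a * U b * (G k a c * dX b c) :=
    (perm_s12of3 (fun a b c => U b * (G k a c * U a * dX b c))).trans
      (sum_ext3 _ _ fun a b c => by ring)
  have cT11 : (∑ x, ∑ x1, ∑ x2, ∑ i, U x * (G k x1 x * (G x1 i x2 * U x2 * X i)))
      = ∑ a, ∑ b, ∑ c, ∑ d, U a * (G k b a * (U c * (G b d c * X d))) :=
    sum_ext4 _ _ fun a b c d => by ring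
  have cT12 : (∑ x, ∑ x1, ∑ x2, ∑ i, U x * (G k x1 x * (G x1 x2 i * U x2 * X i)))
      = ∑ a, ∑ b, ∑ c, ∑ d, G d a c * G k d b * U a * U b * X c :=
    (perm_q2 (fun a b c d => U b * (G k d b * (G d a c * U a * X c)))).trans
      (sum_ext4 _ _ fun a b c d => by ring)
  have cT13 : (∑ x, ∑ x1, ∑ i, G k x1 x * (U i * dU i x) * X x1)
      = ∑ a, ∑ b, ∑ c, U a * (dU a b * (G k c b * X c)) :=
    (perm_rot3 (fun a b c => G k c b * (U a * dU a b) * X c)).trans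
      (sum_ext3 _ _ fun a b c => by ring)
  have cT14 : (∑ x, ∑ x1, ∑ i, G k x x1 * (U i * dU i x) * X x1)
      = ∑ a, ∑ b, ∑ c, U a * (G k b c * dU a b * X c) :=
    (perm_rot3 (fun a b c => G k b c * (U a * dU a b) * X c)).trans
      (sum_ext3 _ _ fun a b c => by ring)
  have cT15 : (∑ x, ∑ x1, ∑ x2, ∑ i, G k x1 x * (U x2 * (G x i x2 * U i)) * X x1)
      = ∑ a, ∑ b, ∑ c, ∑ d, G k d a * X d * (U b * (G a c b * U c)) :=
    (perm_q4 (fun a b c d => G k d a * (U b * (G a c b * U c)) * X d)).trans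
      (sum_ext4 _ _ fun a b c d => by ring)
  have cT16 : (∑ x, ∑ x1, ∑ x2, ∑ i, G k x x1 * (U x2 * (G x i x2 * U i)) * X x1)
      = ∑ a, ∑ b, ∑ c, ∑ d, G d a b * G k d c * U a * U b * X c :=
    (perm_rev4 (fun a b c d => G k d c * (U b * (G d a b * U a)) * X c)).trans
      (sum_ext4 _ _ fun a b c d => by ring)
  have cH2 : (∑ x, ∑ x1, ∑ i, U x * U x1 * (X i * dG i k x x1))
      = ∑ a, ∑ b, ∑ c, dG c k a b * U a * U b * X c :=
    sum_ext3 _ _ fun a b c => by ring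
  have cH4 : (∑ x, ∑ x1, ∑ i, U x * U x1 * (G k i x1 * dX x i))
      = ∑ a, ∑ b, ∑ c, U a * (U b * (G k c b * dX a c)) :=
    sum_ext3 _ _ fun a b c => by ring
  have cH8 : (∑ x, ∑ x1, dX x k * (U x1 * dU x1 x))
      = ∑ a, ∑ b, U a * (dU a b * dX b k) :=
    Finset.sum_comm.trans (sum_ext2 _ _ fun a b => by ring)
  have cH9 : (∑ x, ∑ x1, ∑ i, G k i x * X i * (U x1 * dU x1 x))
      = ∑ a, ∑ b, ∑ c, U a * (dU a b * (G k c b * X c)) :=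
    (perm_s12of3 (fun a b c => G k c b * X c * (U a * dU a b))).trans
      (sum_ext3 _ _ fun a b c => by ring)
  have cH10 : (∑ x, ∑ x1, ∑ x2, dX x k * (U x1 * (G x x2 x1 * U x2)))
      = ∑ a, ∑ b, ∑ c, U a * U b * (G c a b * dX c k) :=
    (perm_rev3 (fun a b c => dX c k * (U b * (G c a b * U a)))).trans
      (sum_ext3 _ _ fun a b c => by ring)
  -- big conversions
  have hgL : ∑ m, U m * (dU m k + ∑ i, (dU m i * (dX i k + ∑ q, G k q i * X q)
          + U i * (DD i m + ∑ q, (dG m k q i * X q + G k q i * dX m q)))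
        + ∑ p, G k p m * (U p + ∑ i, U i * (dX i p + ∑ q, G p q i * X q)))
      = (∑ a, U a * dU a k) + (∑ a, ∑ b, U a * (dU a b * dX b k))
        + (∑ a, ∑ b, ∑ c, U a * (dU a b * (G k c b * X c)))
        + (∑ a, ∑ b, U a * U b * DD a b)
        + (∑ a, ∑ b, ∑ c, U a * (U b * (dG a k c b * X c)))
        + (∑ a, ∑ b, ∑ c, U a * (U b * (G k c b * dX a c)))
        + (∑ a, ∑ b, U a * (G k b a * U b))
        + (∑ a, ∑ b, ∑ c, U a * (U b * (G k c b * dX a c)))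
        + (∑ a, ∑ b, ∑ c, ∑ d, U a * (G k b a * (U c * (G b d c * X d)))) := by
    simp only [mul_add, add_mul, mul_sub, sub_mul, Finset.mul_sum, Finset.sum_mul,
      Finset.sum_add_distrib, Finset.sum_sub_distrib]
    rw [cL4, cL8]
    ring
  have hgR : ∑ i, ∑ j, ∑ l, (dG j k i l - dG l k i j + ∑ m, G m i l * G k m j
            - ∑ m, G m i j * G k m l) * U i * U j * X l
      + ∑ m, U m * (∑ j, ∑ l, (((dG m k l j - dG m k j l) * U j
              + (G k l j - G k j l) * dU m j) * X l + (G k l j - G k j l) * U j * dX m l)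
          + ∑ p, G k p m * ∑ j, ∑ l, (G p l j - G p j l) * U j * X l)
      - ∑ j, ∑ l, ((G k l j - G k j l) * ∑ i, U i * (dU i j + ∑ q, G j q i * U q)) * X l
      = (∑ a, ∑ b, ∑ c, U a * (U b * (dG a k c b * X c)))
        - (∑ a, ∑ b, ∑ c, dG c k a b * U a * U b * X c)
        + (∑ a, ∑ b, ∑ c, U a * (U b * (G k c b * dX a c)))
        - (∑ a, ∑ b, ∑ c, U a * U b * (G k a c * dX b c))
        + (∑ a, ∑ b, ∑ c, ∑ d, U a * (G k b a * (U c * (G b d c * X d))))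
        - (∑ a, ∑ b, ∑ c, ∑ d, G k d a * X d * (U b * (G a c b * U c))) := by
    simp only [mul_add, add_mul, mul_sub, sub_mul, Finset.mul_sum, Finset.sum_mul,
      Finset.sum_add_distrib, Finset.sum_sub_distrib]
    rw [cT5, cT6, cT7, cT9, cT10, cT11, cT12, cT13, cT14, cT15, cT16]
    ring
  have hcL : ∑ i, ∑ j, U i * U j * (DD i j + ∑ m, X m * dG m k i j - ∑ m, G m i j * dX m k
            + ∑ m, G k m j * dX i m + ∑ m, G k i m * dX j m)
      = (∑ a, ∑ b, U a * U b * DD a b)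
        + (∑ a, ∑ b, ∑ c, dG c k a b * U a * U b * X c)
        - (∑ a, ∑ b, ∑ c, U a * U b * (G c a b * dX c k))
        + (∑ a, ∑ b, ∑ c, U a * (U b * (G k c b * dX a c)))
        + (∑ a, ∑ b, ∑ c, U a * U b * (G k a c * dX b c)) := by
    simp only [mul_add, add_mul, mul_sub, sub_mul, Finset.mul_sum, Finset.sum_mul,
      Finset.sum_add_distrib, Finset.sum_sub_distrib]
    rw [cH2, cH4]
  have hcR : -(∑ i, U i * (dU i k + ∑ m, G k m i * U m)
          + ∑ j, (dX j k + ∑ m, G k m j * X m) * ∑ i, U i * (dU i j + ∑ m, G j m i * U m))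
      = -((∑ a, U a * dU a k) + (∑ a, ∑ b, U a * (G k b a * U b))
          + (∑ a, ∑ b, U a * (dU a b * dX b k))
          + (∑ a, ∑ b, ∑ c, U a * U b * (G c a b * dX c k))
          + (∑ a, ∑ b, ∑ c, U a * (dU a b * (G k c b * X c)))
          + (∑ a, ∑ b, ∑ c, ∑ d, G k d a * X d * (U b * (G a c b * U c)))) := by
    simp only [mul_add, add_mul, mul_sub, sub_mul, Finset.mul_sum, Finset.sum_mul,
      Finset.sum_add_distrib, Finset.sum_sub_distrib, neg_add]
    rw [cH8, cH9, cH10]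
    ring
  rw [hgL, hgR]
  rw [hcL, hcR] at hc
  linear_combination hc


/-- deviation equation under the condition
`u^i u^j £_ξ Γ^k_{ij} = −(F^k + ξ^k_{|j} F^j)`, where `F^k := u^i u^k_{|i}`:
`u^n (u^k + u^i ξ^k_{|i})_{|n} = R^k_{ijl} u^i u^j ξ^l + u^n (w^k)_{|n} − T^k_{jl} F^j ξ^l`,
where `w^k := T^k_{jl} u^j ξ^l`. -/
theorem deviation_condition_vi {n : ℕ} (hn : 0 < n)
    (Γ : Fin n → Fin n → Fin n → (Fin n → ℝ) → ℝ)
    (u ξ : Fin n → (Fin n → ℝ) → ℝ)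
    (hΓ : ∀ k i j, ContDiff ℝ (⊤ : ℕ∞) (Γ k i j))
    (hu : ∀ k, ContDiff ℝ (⊤ : ℕ∞) (u k))
    (hξ : ∀ k, ContDiff ℝ (⊤ : ℕ∞) (ξ k))
    (hcond : ∀ (x : Fin n → ℝ) (k : Fin n),
      (∑ i, ∑ j, u i x * u j x * lieC ξ Γ k i j x)
        = -((∑ i, u i x * covV Γ u k i x)
            + (∑ j, covV Γ ξ k j x * (∑ i, u i x * covV Γ u j i x)))) :
    ∀ (x : Fin n → ℝ) (k : Fin n),
      (∑ m, u m x *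
          covV Γ (fun k y => u k y + ∑ i, u i y * covV Γ ξ k i y) k m x) =
        (∑ i, ∑ j, ∑ l, curv Γ k i j l x * u i x * u j x * ξ l x)
          + (∑ m, u m x * covV Γ
              (fun k y => ∑ j, ∑ l, tor Γ k j l y * u j y * ξ l y) k m x)
          - (∑ j, ∑ l, tor Γ k j l x * (∑ i, u i x * covV Γ u j i x) * ξ l x) := by
  
  intro x k
  have hc := hcond x k
  have hud : ∀ m, DifferentiableAt ℝ (u m) x := fun m => ((hu m).differentiable (by simp)).differentiableAt
  have hξd : ∀ m, DifferentiableAt ℝ (ξ m) x := fun m => ((hξ m).differentiable (by simp)).differentiableAt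
  have hΓd : ∀ a b c, DifferentiableAt ℝ (Γ a b c) x := fun a b c => ((hΓ a b c).differentiable (by simp)).differentiableAt
  have hpdξd : ∀ p i, DifferentiableAt ℝ (pd i (ξ p)) x :=
    fun p i => ((contDiff_pd (hξ p) i).differentiable (by simp)).differentiableAt
  have hcovd : ∀ p i, DifferentiableAt ℝ (fun y => pd i (ξ p) y + ∑ q, Γ p q i y * ξ q y) x :=
    fun p i => (hpdξd p i).add (DifferentiableAt.fun_sum fun q _ => (hΓd p q i).mul (hξd q))
  have hpdcov : ∀ (m p i : Fin n),
      pd m (fun y => pd i (ξ p) y + ∑ q, Γ p q i y * ξ q y) x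
        = pd m (pd i (ξ p)) x + ∑ q, (pd m (Γ p q i) x * ξ q x + Γ p q i x * pd m (ξ q) x) := by
    intro m p i
    rw [pd_add m (hpdξd p i) (DifferentiableAt.fun_sum fun q _ => (hΓd p q i).fun_mul (hξd q)),
        pd_sum _ m (fun q _ => (hΓd p q i).fun_mul (hξd q))]
    exact congrArg _ (Finset.sum_congr rfl fun q _ => pd_mul m (hΓd p q i) (hξd q))
  have hBIG : ∀ m : Fin n, pd m (fun y => u k y + ∑ i, u i y * (pd i (ξ k) y + ∑ q, Γ k q i y * ξ q y)) x
      = pd m (u k) x + ∑ i, (pd m (u i) x * (pd i (ξ k) x + ∑ q, Γ k q i x * ξ q x)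
          + u i x * (pd m (pd i (ξ k)) x + ∑ q, (pd m (Γ k q i) x * ξ q x + Γ k q i x * pd m (ξ q) x))) := by
    intro m
    rw [pd_add m (hud k) (DifferentiableAt.fun_sum fun i _ => (hud i).fun_mul (hcovd k i)),
        pd_sum _ m (fun i _ => (hud i).fun_mul (hcovd k i))]
    refine congrArg _ (Finset.sum_congr rfl fun i _ => ?_)
    rw [pd_mul m (hud i) (hcovd k i), hpdcov m k i]
  have htorud : ∀ a b c : Fin n, DifferentiableAt ℝ (fun y => (Γ a c b y - Γ a b c y) * u b y) x :=
    fun a b c => ((hΓd a c b).sub (hΓd a b c)).mul (hud b)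
  have hW : ∀ m : Fin n, pd m (fun y => ∑ j, ∑ l, (Γ k l j y - Γ k j l y) * u j y * ξ l y) x
      = ∑ j, ∑ l, (((pd m (Γ k l j) x - pd m (Γ k j l) x) * u j x
            + (Γ k l j x - Γ k j l x) * pd m (u j) x) * ξ l x
          + (Γ k l j x - Γ k j l x) * u j x * pd m (ξ l) x) := by
    intro m
    rw [pd_sum _ m (fun j _ => DifferentiableAt.fun_sum fun l _ => (htorud k j l).fun_mul (hξd l))]
    refine Finset.sum_congr rfl fun j _ => ?_
    rw [pd_sum _ m (fun l _ => (htorud k j l).fun_mul (hξd l))]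
    refine Finset.sum_congr rfl fun l _ => ?_
    rw [pd_mul m (htorud k j l) (hξd l), pd_mul m ((hΓd k l j).fun_sub (hΓd k j l)) (hud j),
        pd_sub m (hΓd k l j) (hΓd k j l)]
  simp only [covV, curv, tor, lieC] at hc ⊢
  simp only [hBIG, hW]
  exact key k (fun a => u a x) (fun a => ξ a x) (fun a b => pd a (u b) x)
    (fun a b => pd a (ξ b) x) (fun a b => pd b (pd a (ξ k)) x)
    (fun a b c => Γ a b c x) (fun d a b c => pd d (Γ a b c) x) hc
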